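/- arXiv:1005.2160 — 3 statements merged into one kernel-verified Lean document; each statement's English description precedes it below -/
import Mathlib

section
/- The Mikhailov–Novikov–Wang system is Hamiltonian with Hamiltonian operator P and Hamiltonian H₂: applying the matrix differential operator P (with entries P₁₁ = Dₓ³ − (6/5)u Dₓ − (3/5)u₁, P₁₂ = P₂₁ = −(6/5)v Dₓ − (3/5)v₁, P₂₂ = 3Dₓ³ − ((18/5)u + (12/5)v)Dₓ − (9/5)u₁ − (6/5)v₁) to the column vector (δH₂/δu, δH₂/δv) = (−(5/3)u₂ + 4u² − 2v², 5v₂ + 2v² − 4uv) yields exactly the column vector of right-hand sides of the system, namely (−(5/3)u₅ − 10vv₃ − 15v₁v₂ + 10uu₃ + 25u₁u₂ − 6v²v₁ + 6v²u₁ + 12uvv₁ − 12u²u₁, 15v₅ + 30v₁v₂ − 30uv₃ − 45u₁v₂ − 35u₂v₁ − 10vu₃ − 6v²v₁ + 6v²u₁ + 12u²v₁ + 12uvu₁). -/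
open MvPolynomial

/-- The differential polynomial ring ℚ[u, v, u₁, v₁, u₂, v₂, ...]:
variable `(0, i)` is `uᵢ`, `(1, i)` is `vᵢ`. -/
abbrev DP : Type := MvPolynomial (Fin 2 × ℕ) ℚ

noncomputable def U (i : ℕ) : DP := X (0, i)
noncomputable def V (i : ℕ) : DP := X (1, i)

/-- The total derivative Dₓ, the unique derivation with Dₓ(uᵢ)=uᵢ₊₁, Dₓ(vᵢ)=vᵢ₊₁. -/
noncomputable def Dx : Derivation ℚ DP DP :=
  mkDerivation ℚ (fun p => X (p.1, p.2 + 1))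

noncomputable def DxL : DP →ₗ[ℚ] DP := Dx.toLinearMap

/-- Largest derivative order occurring in a differential polynomial. -/
noncomputable def maxIdx (h : DP) : ℕ := h.vars.sup (fun p => p.2)

/-- Variational derivative δh/δu = Σₖ (−Dₓ)ᵏ(∂h/∂uₖ). -/
noncomputable def varU (h : DP) : DP :=
  ∑ k ∈ Finset.range (maxIdx h + 1), ((-DxL) ^ k) (pderiv (0, k) h)

/-- Variational derivative δh/δv. -/
noncomputable def varV (h : DP) : DP :=
  ∑ k ∈ Finset.range (maxIdx h + 1), ((-DxL) ^ k) (pderiv (1, k) h)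

/-- The evolutionary derivation D_Q with D_Q(uᵢ)=Dₓⁱ(Q¹), D_Q(vᵢ)=Dₓⁱ(Q²). -/
noncomputable def evDer (Q1 Q2 : DP) : Derivation ℚ DP DP :=
  mkDerivation ℚ (fun p => (DxL ^ p.2) (if p.1 = 0 then Q1 else Q2))

/-- Right-hand side F₁ of the Mikhailov–Novikov–Wang system. -/
noncomputable def F1 : DP :=
  -(5/3 : ℚ) • U 5 - 10 * V 0 * V 3 - 15 * V 1 * V 2 + 10 * U 0 * U 3
    + 25 * U 1 * U 2 - 6 * V 0 ^ 2 * V 1 + 6 * V 0 ^ 2 * U 1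
    + 12 * U 0 * V 0 * V 1 - 12 * U 0 ^ 2 * U 1

/-- Right-hand side F₂ of the Mikhailov–Novikov–Wang system. -/
noncomputable def F2 : DP :=
  15 * V 5 + 30 * V 1 * V 2 - 30 * U 0 * V 3 - 45 * U 1 * V 2
    - 35 * U 2 * V 1 - 10 * V 0 * U 3 - 6 * V 0 ^ 2 * V 1 + 6 * V 0 ^ 2 * U 1
    + 12 * U 0 ^ 2 * V 1 + 12 * U 0 * V 0 * U 1

/-- Action of the Hamiltonian operator P on a column (g₁,g₂): first component. -/
noncomputable def Pact1 (g1 g2 : DP) : DP :=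
  ((DxL ^ 3) g1 - (6/5 : ℚ) • (U 0 * DxL g1) - (3/5 : ℚ) • (U 1 * g1))
    + (-(6/5 : ℚ) • (V 0 * DxL g2) - (3/5 : ℚ) • (V 1 * g2))

/-- Action of the Hamiltonian operator P on a column (g₁,g₂): second component. -/
noncomputable def Pact2 (g1 g2 : DP) : DP :=
  (-(6/5 : ℚ) • (V 0 * DxL g1) - (3/5 : ℚ) • (V 1 * g1))
    + (3 • (DxL ^ 3) g2 - (((18/5 : ℚ) • U 0 + (12/5 : ℚ) • V 0) * DxL g2)
        - (9/5 : ℚ) • (U 1 * g2) - (6/5 : ℚ) • (V 1 * g2))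



lemma DxU (i : ℕ) : Dx (U i) = U (i+1) := by
  simp [Dx, U, mkDerivation_X]

lemma DxV (i : ℕ) : Dx (V i) = V (i+1) := by
  simp [Dx, V, mkDerivation_X]

lemma Dx_one : Dx (1 : DP) = 0 := Dx.map_one_eq_zero

lemma Dx_zero : Dx (0 : DP) = 0 := Dx.map_zero

lemma Dx_ofNat (n : ℕ) [n.AtLeastTwo] :
    Dx (no_index (OfNat.ofNat n) : DP) = 0 := Dx.map_natCast n

lemma DxL_apply (p : DP) : DxL p = Dx p := rfl

lemma DxLU (i : ℕ) : DxL (U i) = U (i+1) := DxU i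
lemma DxLV (i : ℕ) : DxL (V i) = V (i+1) := DxV i


noncomputable def G1 : DP := -(5/3 : ℚ) • U 2 + 4 * U 0 ^ 2 - 2 * V 0 ^ 2
noncomputable def G2 : DP := (5 : ℚ) • V 2 + 2 * V 0 ^ 2 - 4 * U 0 * V 0

attribute [local simp] Dx_one Dx_zero Dx_ofNat DxU DxV

lemma dg1 : Dx G1 = -(5/3 : ℚ) • U 3 + 8 * (U 0 * U 1) - 4 * (V 0 * V 1) := by
  simp only [G1, map_add, map_sub, map_neg, Derivation.map_smul, Derivation.leibniz,
    Derivation.leibniz_pow, DxU, DxV, Dx_ofNat, nsmul_eq_mul, Nat.cast_ofNat,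
    mul_zero, zero_mul, zero_add, add_zero, smul_eq_mul, smul_zero, neg_smul]
  ring

lemma dg1' : Dx (-(5/3 : ℚ) • U 3 + 8 * (U 0 * U 1) - 4 * (V 0 * V 1)) =
    -(5/3 : ℚ) • U 4 + 8 * (U 1 ^ 2) + 8 * (U 0 * U 2) - 4 * (V 1 ^ 2) - 4 * (V 0 * V 2) := by
  simp only [map_add, map_sub, map_neg, Derivation.map_smul, Derivation.leibniz,
    DxU, DxV, Dx_ofNat, mul_zero, zero_mul, zero_add, add_zero, neg_smul,
    smul_eq_mul, smul_zero, nsmul_eq_mul, Nat.cast_ofNat]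
  ring

lemma dg1'' : Dx (-(5/3 : ℚ) • U 4 + 8 * (U 1 ^ 2) + 8 * (U 0 * U 2) - 4 * (V 1 ^ 2) - 4 * (V 0 * V 2)) =
    -(5/3 : ℚ) • U 5 + 24 * (U 1 * U 2) + 8 * (U 0 * U 3) - 12 * (V 1 * V 2) - 4 * (V 0 * V 3) := by
  simp only [map_add, map_sub, map_neg, Derivation.map_smul, Derivation.leibniz,
    Derivation.leibniz_pow, DxU, DxV, Dx_ofNat, nsmul_eq_mul, Nat.cast_ofNat,
    mul_zero, zero_mul, zero_add, add_zero, smul_eq_mul, smul_zero, neg_smul, pow_one]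
  ring

lemma dg2 : Dx G2 = (5 : ℚ) • V 3 + 4 * (V 0 * V 1) - 4 * (U 1 * V 0) - 4 * (U 0 * V 1) := by
  simp only [G2, map_add, map_sub, map_neg, Derivation.map_smul, Derivation.leibniz,
    Derivation.leibniz_pow, DxU, DxV, Dx_ofNat, nsmul_eq_mul, Nat.cast_ofNat,
    mul_zero, zero_mul, zero_add, add_zero, smul_eq_mul, smul_zero]
  ring

lemma dg2' : Dx ((5 : ℚ) • V 3 + 4 * (V 0 * V 1) - 4 * (U 1 * V 0) - 4 * (U 0 * V 1)) =
    (5 : ℚ) • V 4 + 4 * (V 1 ^ 2) + 4 * (V 0 * V 2) - 4 * (U 2 * V 0) - 8 * (U 1 * V 1)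
      - 4 * (U 0 * V 2) := by
  simp only [map_add, map_sub, map_neg, Derivation.map_smul, Derivation.leibniz,
    DxU, DxV, Dx_ofNat, mul_zero, zero_mul, zero_add, add_zero,
    smul_eq_mul, smul_zero, nsmul_eq_mul, Nat.cast_ofNat]
  ring

lemma dg2'' : Dx ((5 : ℚ) • V 4 + 4 * (V 1 ^ 2) + 4 * (V 0 * V 2) - 4 * (U 2 * V 0) - 8 * (U 1 * V 1)
      - 4 * (U 0 * V 2)) =
    (5 : ℚ) • V 5 + 12 * (V 1 * V 2) + 4 * (V 0 * V 3) - 4 * (U 3 * V 0) - 12 * (U 2 * V 1)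
      - 12 * (U 1 * V 2) - 4 * (U 0 * V 3) := by
  simp only [map_add, map_sub, map_neg, Derivation.map_smul, Derivation.leibniz,
    Derivation.leibniz_pow, DxU, DxV, Dx_ofNat, nsmul_eq_mul, Nat.cast_ofNat,
    mul_zero, zero_mul, zero_add, add_zero, smul_eq_mul, smul_zero, pow_one]
  ring

lemma L3g1 : (DxL ^ 3) G1 =
    -(5/3 : ℚ) • U 5 + 24 * (U 1 * U 2) + 8 * (U 0 * U 3) - 12 * (V 1 * V 2) - 4 * (V 0 * V 3) := by
  show DxL (DxL (DxL G1)) = _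
  simp only [DxL_apply]
  rw [dg1, dg1', dg1'']

lemma L3g2 : (DxL ^ 3) G2 =
    (5 : ℚ) • V 5 + 12 * (V 1 * V 2) + 4 * (V 0 * V 3) - 4 * (U 3 * V 0) - 12 * (U 2 * V 1)
      - 12 * (U 1 * V 2) - 4 * (U 0 * V 3) := by
  show DxL (DxL (DxL G2)) = _
  simp only [DxL_apply]
  rw [dg2, dg2', dg2'']

lemma dL1 : DxL G1 = -(5/3 : ℚ) • U 3 + 8 * (U 0 * U 1) - 4 * (V 0 * V 1) := by
  rw [DxL_apply, dg1]

lemma dL2 : DxL G2 = (5 : ℚ) • V 3 + 4 * (V 0 * V 1) - 4 * (U 1 * V 0) - 4 * (U 0 * V 1) := by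
  rw [DxL_apply, dg2]

set_option maxHeartbeats 1000000 in
set_option synthInstance.maxHeartbeats 400000 in
/-- the MNW system is Hamiltonian: P applied to
(δH₂/δu, δH₂/δv) gives the right-hand sides (F₁, F₂). -/
theorem MNW_is_Hamiltonian :
    Pact1 (-(5/3 : ℚ) • U 2 + 4 * U 0 ^ 2 - 2 * V 0 ^ 2) ((5 : ℚ) • V 2 + 2 * V 0 ^ 2 - 4 * U 0 * V 0) = F1 ∧
    Pact2 (-(5/3 : ℚ) • U 2 + 4 * U 0 ^ 2 - 2 * V 0 ^ 2) ((5 : ℚ) • V 2 + 2 * V 0 ^ 2 - 4 * U 0 * V 0) = F2 := by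
  have hg1 : (-(5/3 : ℚ) • U 2 + 4 * U 0 ^ 2 - 2 * V 0 ^ 2) = G1 := rfl
  have hg2 : ((5 : ℚ) • V 2 + 2 * V 0 ^ 2 - 4 * U 0 * V 0) = G2 := rfl
  constructor <;>
  · rw [hg1, hg2]
    apply smul_right_injective DP (show (15:ℚ) ≠ 0 by norm_num)
    simp only [Pact1, Pact2, F1, F2, L3g1, L3g2, dL1, dL2]
    simp only [G1, G2]
    simp only [smul_add, smul_sub, smul_neg, neg_smul, smul_smul, smul_mul_assoc,
      mul_smul_comm, mul_neg, neg_mul, mul_add, mul_sub, add_mul, sub_mul, nsmul_eq_mul, Nat.cast_ofNat]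
    norm_num
    simp only [Algebra.smul_def, map_ofNat, map_neg, map_one]
    ring
end

section
/- The covector γ₂ = (γ₂₁, γ₂₂) with γ₂₁ = u₂ − (12/5)u² + (6/5)v² and γ₂₂ = −(6/5)v² + (12/5)uv − 3v₂ is a cosymmetry (conserved covector) of the Mikhailov–Novikov–Wang system in the following verifiable sense: γ₂₁·F₁ + γ₂₂·F₂ is a total x-derivative, i.e., its variational derivatives with respect to u and v both vanish, where F₁, F₂ are the right-hand sides of the system. -/
open MvPolynomial

noncomputable def gamma21 : DP := U 2 - (12/5 : ℚ) • (U 0 ^ 2) + (6/5 : ℚ) • (V 0 ^ 2)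
noncomputable def gamma22 : DP := -(6/5 : ℚ) • (V 0 ^ 2) + (12/5 : ℚ) • (U 0 * V 0) - (3 : ℚ) • V 2

lemma Dx_X (p : Fin 2 × ℕ) : Dx (X p) = X (p.1, p.2 + 1) := by
  rw [Dx, mkDerivation_X]

lemma Dx_U (i : ℕ) : Dx (U i) = U (i + 1) := by rw [U, Dx_X]; rfl
lemma Dx_V (i : ℕ) : Dx (V i) = V (i + 1) := by rw [V, Dx_X]; rfl

/-- Commutation relation: ∂_{(a,k+1)} ∘ Dₓ = Dₓ ∘ ∂_{(a,k+1)} + ∂_{(a,k)}. -/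
lemma comm_succ (a : Fin 2) (k : ℕ) (p : DP) :
    pderiv ((a, k+1) : Fin 2 × ℕ) (Dx p)
      = Dx (pderiv ((a, k+1) : Fin 2 × ℕ) p) + pderiv ((a, k) : Fin 2 × ℕ) p := by
  have h : (⁅(pderiv ((a, k+1) : Fin 2 × ℕ) : Derivation ℚ DP DP), Dx⁆)
      = (pderiv ((a, k) : Fin 2 × ℕ) : Derivation ℚ DP DP) := by
    apply derivation_ext
    rintro ⟨b, j⟩
    rw [Derivation.commutator_apply, Dx_X]
    by_cases h1 : ((b, j) : Fin 2 × ℕ) = (a, k)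
    · have hb : b = a := congrArg Prod.fst h1
      have hj : j = k := congrArg Prod.snd h1
      subst hb; subst hj
      simp [pderiv_X_self, pderiv_X_of_ne (show ((b, j) : Fin 2 × ℕ) ≠ (b, j+1) by simp)]
    · have h2 : ((b, j+1) : Fin 2 × ℕ) ≠ (a, k+1) := by
        intro hc
        exact h1 (by
          have hb : b = a := congrArg Prod.fst hc
          have hj : j + 1 = k + 1 := congrArg Prod.snd hc
          simp [hb, Nat.succ_injective hj])
      rw [pderiv_X_of_ne h2, pderiv_X_of_ne h1]
      by_cases h3 : ((b, j) : Fin 2 × ℕ) = (a, k+1)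
      · rw [h3, pderiv_X_self, Derivation.map_one_eq_zero, zero_sub, neg_zero]
      · rw [pderiv_X_of_ne h3, Derivation.map_zero, sub_zero]
  have := congrArg (fun D : Derivation ℚ DP DP => D p) h
  simp only [Derivation.commutator_apply] at this
  linear_combination this

/-- Commutation relation at order 0: ∂_{(a,0)} ∘ Dₓ = Dₓ ∘ ∂_{(a,0)}. -/
lemma comm_zero (a : Fin 2) (p : DP) :
    pderiv ((a, 0) : Fin 2 × ℕ) (Dx p) = Dx (pderiv ((a, 0) : Fin 2 × ℕ) p) := by
  have h : (⁅(pderiv ((a, 0) : Fin 2 × ℕ) : Derivation ℚ DP DP), Dx⁆)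
      = (0 : Derivation ℚ DP DP) := by
    apply derivation_ext
    rintro ⟨b, j⟩
    rw [Derivation.commutator_apply, Dx_X]
    have h2 : ((b, j+1) : Fin 2 × ℕ) ≠ (a, 0) := by
      intro hc; exact Nat.succ_ne_zero j (congrArg Prod.snd hc)
    rw [pderiv_X_of_ne h2]
    by_cases h3 : ((b, j) : Fin 2 × ℕ) = (a, 0)
    · rw [h3, pderiv_X_self, Derivation.map_one_eq_zero, zero_sub, neg_zero,
        Derivation.coe_zero, Pi.zero_apply]
    · rw [pderiv_X_of_ne h3, Derivation.map_zero, sub_zero,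
        Derivation.coe_zero, Pi.zero_apply]
  have := congrArg (fun D : Derivation ℚ DP DP => D p) h
  simp only [Derivation.commutator_apply, Derivation.coe_zero, Pi.zero_apply] at this
  linear_combination this

/-- `ord h M` : all partial derivatives of `h` of order `> M` vanish. -/
def ord (h : DP) (M : ℕ) : Prop :=
  ∀ (a : Fin 2) (k : ℕ), M < k → pderiv ((a, k) : Fin 2 × ℕ) h = 0

lemma ord_maxIdx (h : DP) : ord h (maxIdx h) := by
  intro a k hk
  apply pderiv_eq_zero_of_notMem_vars
  intro hmem
  have hle : ((a, k) : Fin 2 × ℕ).2 ≤ maxIdx h :=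
    Finset.le_sup (f := fun p : Fin 2 × ℕ => p.2) hmem
  simp only at hle
  omega

lemma ord_Dx {g : DP} {M : ℕ} (hg : ord g M) : ord (DxL g) (M + 1) := by
  intro a k hk
  obtain ⟨k', rfl⟩ : ∃ k', k = k' + 1 := ⟨k - 1, by omega⟩
  rw [DxL_apply, comm_succ, hg a (k' + 1) (by omega), hg a k' (by omega),
    Derivation.map_zero, add_zero]

lemma ord_smul {g : DP} {M : ℕ} (c : ℚ) (hg : ord g M) : ord (c • g) M := by
  intro a k hk
  rw [Derivation.map_smul, hg a k hk, smul_zero]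

/-- Generic truncated variational sum. -/
noncomputable def varA (a : Fin 2) (N : ℕ) (h : DP) : DP :=
  ∑ k ∈ Finset.range (N + 1), ((-DxL) ^ k) (pderiv ((a, k) : Fin 2 × ℕ) h)

lemma varU_eq (h : DP) : varU h = varA 0 (maxIdx h) h := rfl
lemma varV_eq (h : DP) : varV h = varA 1 (maxIdx h) h := rfl

lemma varA_ord (a : Fin 2) {h : DP} {N M : ℕ} (hN : ord h N) (hNM : N ≤ M) :
    varA a M h = varA a N h := by
  refine (Finset.sum_subset ?_ ?_).symm
  · intro x hx
    simp only [Finset.mem_range] at hx ⊢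
    omega
  · intro x _ hnx
    simp only [Finset.mem_range] at hnx
    rw [hN a x (by omega), map_zero]

lemma varA_eq_of_ord (a : Fin 2) {h : DP} {N : ℕ} (hN : ord h N) :
    varA a (maxIdx h) h = varA a N h := by
  rcases le_total (maxIdx h) N with hle | hle
  · exact (varA_ord a (ord_maxIdx h) hle).symm
  · exact varA_ord a hN hle

lemma pow_neg_succ (k : ℕ) (p : DP) :
    ((-DxL) ^ (k+1)) p = -(((-DxL) ^ k) (Dx p)) := by
  rw [pow_succ, Module.End.mul_apply, LinearMap.neg_apply, map_neg, DxL_apply]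

/-- The variational derivative of a total derivative vanishes. -/
lemma varA_Dx (a : Fin 2) {g : DP} {M : ℕ} (hg : ord g M) :
    varA a (maxIdx (DxL g)) (DxL g) = 0 := by
  rw [varA_eq_of_ord a (ord_Dx hg)]
  unfold varA
  rw [Finset.sum_range_succ']
  have key : ∀ k ∈ Finset.range (M + 1),
      ((-DxL) ^ (k+1)) (pderiv ((a, k+1) : Fin 2 × ℕ) (DxL g))
        = (fun j => ((-DxL) ^ j) (Dx (pderiv ((a, j) : Fin 2 × ℕ) g))) (k+1)
          - (fun j => ((-DxL) ^ j) (Dx (pderiv ((a, j) : Fin 2 × ℕ) g))) k := by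
    intro k _
    have h1 : pderiv ((a, k+1) : Fin 2 × ℕ) (DxL g)
        = Dx (pderiv ((a, k+1) : Fin 2 × ℕ) g) + pderiv ((a, k) : Fin 2 × ℕ) g :=
      comm_succ a k g
    rw [h1, map_add]
    have h2 := pow_neg_succ k (pderiv ((a, k) : Fin 2 × ℕ) g)
    rw [h2]
    simp only [pow_neg_succ]
    ring
  rw [Finset.sum_congr rfl key,
    Finset.sum_range_sub (fun j => ((-DxL) ^ j) (Dx (pderiv ((a, j) : Fin 2 × ℕ) g)))]
  have h0 : pderiv ((a, 0) : Fin 2 × ℕ) (DxL g) = Dx (pderiv ((a, 0) : Fin 2 × ℕ) g) :=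
    comm_zero a g
  rw [h0, hg a (M+1) (by omega)]
  simp

/-- Primitive (times 150) of γ₂₁F₁ + γ₂₂F₂. -/
noncomputable def Gprim : DP :=
  (864 : ℚ) • (U 0 * U 0 * U 0 * U 0 * U 0)
  + (-3600 : ℚ) • (U 0 * U 0 * U 0 * U 2)
  + (600 : ℚ) • (U 0 * U 0 * U 4)
  + (-7200 : ℚ) • (U 0 * U 0 * V 0 * V 2)
  + (3600 : ℚ) • (U 0 * U 0 * V 1 * V 1)
  + (-1200 : ℚ) • (U 0 * U 1 * U 3)
  + (-7200 : ℚ) • (U 0 * U 1 * V 0 * V 1)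
  + (1350 : ℚ) • (U 0 * U 2 * U 2)
  + (-1800 : ℚ) • (U 0 * U 2 * V 0 * V 0)
  + (5400 : ℚ) • (U 0 * V 0 * V 0 * V 2)
  + (5400 : ℚ) • (U 0 * V 0 * V 4)
  + (-5400 : ℚ) • (U 0 * V 1 * V 3)
  + (9450 : ℚ) • (U 0 * V 2 * V 2)
  + (1200 : ℚ) • (U 1 * U 1 * U 2)
  + (3600 : ℚ) • (U 1 * U 1 * V 0 * V 0)
  + (-5400 : ℚ) • (U 1 * V 0 * V 3)
  + (10800 : ℚ) • (U 1 * V 1 * V 2)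
  + (-250 : ℚ) • (U 2 * U 4)
  + (1800 : ℚ) • (U 2 * V 0 * V 0 * V 0)
  + (3900 : ℚ) • (U 2 * V 0 * V 2)
  + (-600 : ℚ) • (U 2 * V 1 * V 1)
  + (125 : ℚ) • (U 3 * U 3)
  + (600 : ℚ) • (U 3 * V 0 * V 1)
  + (-300 : ℚ) • (U 4 * V 0 * V 0)
  + (-1800 : ℚ) • (V 0 * V 0 * V 0 * V 2)
  + (-2700 : ℚ) • (V 0 * V 0 * V 4)
  + (5400 : ℚ) • (V 0 * V 1 * V 3)
  + (-2700 : ℚ) • (V 0 * V 2 * V 2)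
  + (-5400 : ℚ) • (V 1 * V 1 * V 2)
  + (-6750 : ℚ) • (V 2 * V 4)
  + (3375 : ℚ) • (V 3 * V 3)

lemma ord_Gprim : ord Gprim 4 := by
  intro a k hk
  have e : ∀ (b : Fin 2) (i : ℕ), i ≤ 4 → pderiv ((a, k) : Fin 2 × ℕ) (X (b, i) : DP) = 0 := by
    intro b i hi
    refine pderiv_X_of_ne fun hc => ?_
    have := congrArg Prod.snd hc
    simp only at this
    omega
  have eU : ∀ i : ℕ, i ≤ 4 → pderiv ((a, k) : Fin 2 × ℕ) (U i) = 0 := fun i hi => e 0 i hi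
  have eV : ∀ i : ℕ, i ≤ 4 → pderiv ((a, k) : Fin 2 × ℕ) (V i) = 0 := fun i hi => e 1 i hi
  simp only [Gprim, map_add, Derivation.map_smul, Derivation.leibniz, smul_eq_mul,
    eU 0 (by omega), eU 1 (by omega), eU 2 (by omega), eU 3 (by omega), eU 4 (by omega),
    eV 0 (by omega), eV 1 (by omega), eV 2 (by omega), eV 3 (by omega), eV 4 (by omega),
    mul_zero, zero_mul, add_zero, zero_add, smul_zero]

/-- Scaled covectors / right-hand sides with integral coefficients. -/
noncomputable def A5 : DP := (-12) * (U 0 * U 0) + 5 * (U 2) + 6 * (V 0 * V 0)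

noncomputable def B3 : DP :=
  (-36) * (U 0 * U 0 * U 1) + 30 * (U 0 * U 3) + 36 * (U 0 * V 0 * V 1)
  + 75 * (U 1 * U 2) + 18 * (U 1 * V 0 * V 0) + (-5) * (U 5)
  + (-18) * (V 0 * V 0 * V 1) + (-30) * (V 0 * V 3) + (-45) * (V 1 * V 2)

noncomputable def C5 : DP := 12 * (U 0 * V 0) + (-6) * (V 0 * V 0) + (-15) * (V 2)

lemma hA5 : (5 : ℚ) • gamma21 = A5 := by
  simp only [gamma21, A5, smul_add, smul_sub, smul_neg, smul_smul]
  norm_num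
  simp only [smul_eq_C_mul, map_ofNat]
  ring

lemma hB3 : (3 : ℚ) • F1 = B3 := by
  simp only [F1, B3, smul_add, smul_sub, smul_neg, smul_smul]
  norm_num
  simp only [smul_eq_C_mul, map_ofNat]
  ring

lemma hC5 : (5 : ℚ) • gamma22 = C5 := by
  simp only [gamma22, C5, smul_add, smul_sub, smul_neg, smul_smul]
  norm_num
  simp only [smul_eq_C_mul, map_ofNat]
  ring

/-- Main computational identity: Dₓ Gprim = 150 · (γ₂₁F₁ + γ₂₂F₂). -/
lemma DxGprim : DxL Gprim = 10 * (A5 * B3) + 30 * (C5 * F2) := by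
  rw [DxL_apply]
  simp only [Gprim, A5, B3, C5, F2, map_add, Derivation.map_smul, Derivation.leibniz,
    smul_eq_mul, Dx_U, Dx_V]
  simp only [smul_eq_C_mul, map_neg, map_ofNat]
  ring

lemma key : gamma21 * F1 + gamma22 * F2 = DxL ((1/150 : ℚ) • Gprim) := by
  have h1 : (150 : ℚ) • (gamma21 * F1 + gamma22 * F2) = DxL Gprim := by
    rw [DxGprim]
    have e1 : (150 : ℚ) • (gamma21 * F1) = 10 * (A5 * B3) := by
      calc (150 : ℚ) • (gamma21 * F1)
          = (10 : ℚ) • (((5 : ℚ) • gamma21) * ((3 : ℚ) • F1)) := by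
            rw [smul_mul_smul_comm]; rw [smul_smul]; norm_num
        _ = 10 * (A5 * B3) := by
            rw [hA5, hB3, smul_eq_C_mul, map_ofNat]
    have e2 : (150 : ℚ) • (gamma22 * F2) = 30 * (C5 * F2) := by
      calc (150 : ℚ) • (gamma22 * F2)
          = (30 : ℚ) • (((5 : ℚ) • gamma22) * F2) := by
            rw [smul_mul_assoc, smul_smul]; norm_num
        _ = 30 * (C5 * F2) := by rw [hC5, smul_eq_C_mul, map_ofNat]
    rw [smul_add, e1, e2]
  rw [map_smul, ← h1, smul_smul]
  norm_num



/-- the covector γ₂ is a cosymmetry of the MNW system: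
γ₂₁F₁ + γ₂₂F₂ is a total x-derivative, i.e. its variational
derivatives vanish. -/
theorem gamma2_cosymmetry :
    varU (gamma21 * F1 + gamma22 * F2) = 0 ∧
    varV (gamma21 * F1 + gamma22 * F2) = 0 := by
  have hord : ord ((1/150 : ℚ) • Gprim) 4 := ord_smul _ ord_Gprim
  rw [key]
  exact ⟨by rw [varU_eq]; exact varA_Dx 0 hord, by rw [varV_eq]; exact varA_Dx 1 hord⟩
end

section
/- The Hamiltonian operator P satisfies the skew-symmetry condition at the level of bilinear pairings: for all differential polynomials f₁, f₂, g₁, g₂ in ℚ[u, v, u₁, v₁, ...], the expression ⟨(f₁,f₂), P(g₁,g₂)⟩ + ⟨(g₁,g₂), P(f₁,f₂)⟩ = f₁(P(g₁,g₂))¹ + f₂(P(g₁,g₂))² + g₁(P(f₁,f₂))¹ + g₂(P(f₁,f₂))² is a total x-derivative. -/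
open MvPolynomial

lemma c_split (q : ℚ) (n : ℕ) [n.AtLeastTwo] :
    (C (OfNat.ofNat n * q) : DP) = OfNat.ofNat n * C q := by
  rw [C_mul, map_ofNat]

lemma dxl_ofNat (n : ℕ) [n.AtLeastTwo] : DxL (OfNat.ofNat n : DP) = 0 := by
  rw [show (OfNat.ofNat n : DP) = C (OfNat.ofNat n : ℚ) from (map_ofNat C n).symm]
  simp [DxL]

lemma dxl_mul (a b : DP) : DxL (a * b) = a * DxL b + b * DxL a := by
  simpa [DxL, smul_eq_mul] using Dx.leibniz a b

lemma dxl_C (c : ℚ) : DxL (C c) = 0 := by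
  simp [DxL]

lemma dxl_U : DxL (U 0) = U 1 := by
  simp [DxL, Dx, U, mkDerivation_X]

lemma dxl_V : DxL (V 0) = V 1 := by
  simp [DxL, Dx, V, mkDerivation_X]

/-- skew-symmetry of P at the level of pairings: for all
f₁, f₂, g₁, g₂, ⟨(f₁,f₂), P(g₁,g₂)⟩ + ⟨(g₁,g₂), P(f₁,f₂)⟩ is a total
x-derivative. -/
theorem P_pairing_skew :
    ∀ f1 f2 g1 g2 : DP, ∃ σ : DP,
      f1 * Pact1 g1 g2 + f2 * Pact2 g1 g2
        + g1 * Pact1 f1 f2 + g2 * Pact2 f1 f2 = DxL σ := by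
  intro f1 f2 g1 g2
  refine ⟨f1 * DxL (DxL g1) + g1 * DxL (DxL f1) - DxL f1 * DxL g1
      - C (6/5 : ℚ) * (U 0 * (f1 * g1))
      - C (6/5 : ℚ) * (V 0 * (f1 * g2 + f2 * g1))
      + 3 * (f2 * DxL (DxL g2) + g2 * DxL (DxL f2) - DxL f2 * DxL g2)
      - (C (18/5 : ℚ) * U 0 + C (12/5 : ℚ) * V 0) * (f2 * g2), ?_⟩
  simp only [show (6/5 : ℚ) = ((6:ℕ):ℚ) * (1/5) by norm_num,
    show (3/5 : ℚ) = ((3:ℕ):ℚ) * (1/5) by norm_num,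
    show (18/5 : ℚ) = ((18:ℕ):ℚ) * (1/5) by norm_num,
    show (12/5 : ℚ) = ((12:ℕ):ℚ) * (1/5) by norm_num,
    show (9/5 : ℚ) = ((9:ℕ):ℚ) * (1/5) by norm_num,
    Pact1, Pact2, pow_succ, pow_zero, Module.End.mul_apply, Module.End.one_apply,
    smul_eq_C_mul, nsmul_eq_mul, map_add, map_sub, map_neg, neg_smul, neg_mul,
    C_mul, map_natCast, Nat.cast_ofNat,
    dxl_mul, dxl_C, dxl_U, dxl_V, dxl_ofNat,
    show (C (3:ℚ) : DP) = 3 from rfl, show (C (6:ℚ) : DP) = 6 from rfl,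
    show (C (9:ℚ) : DP) = 9 from rfl, show (C (12:ℚ) : DP) = 12 from rfl,
    show (C (18:ℚ) : DP) = 18 from rfl, show DxL (3:DP) = 0 from dxl_C 3, show DxL (6:DP) = 0 from dxl_C 6,
    show DxL (12:DP) = 0 from dxl_C 12, show DxL (18:DP) = 0 from dxl_C 18]
  ring
end
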